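/- arXiv:2009.13098 — 2 statements merged into one kernel-verified Lean document; each statement's English description precedes it below -/
import Mathlib

section
/- Let r, j ≥ 1, let γ : [0,1] → ℂ be a continuously differentiable curve, and let W : ℂ → M_r(ℂ) be continuous on the image of γ. Then the following four conditions are equivalent: (i) there exists a unique monic r×r matrix polynomial P of degree j such that ∫_γ P(z) W(z) z^ℓ dz = 0_r for ℓ = 0,…,j−1; (ii) there exists a unique monic r×r matrix polynomial P of degree j such that ∫_γ z^ℓ W(z) P(z) dz = 0_r for ℓ = 0,…,j−1; (iii) there exists a unique r×r matrix polynomial Q of degree ≤ j−1 such that ∫_γ Q(z) W(z) z^ℓ dz = δ_{ℓ,j−1}·I_r for ℓ = 0,…,j−1; (iv) there exists a unique r×r matrix polynomial Q of degree ≤ j−1 such that ∫_γ z^ℓ W(z) Q(z) dz = δ_{ℓ,j−1}·I_r for ℓ = 0,…,j−1. -/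
/-- An `m × n` matrix polynomial of degree at most `d`:
`P z = ∑_{ℓ=0}^{d} z ^ ℓ • C ℓ` for some constant matrices `C ℓ`. -/
def IsMatPoly (m n d : ℕ) (P : ℂ → Matrix (Fin m) (Fin n) ℂ) : Prop :=
  ∃ C : ℕ → Matrix (Fin m) (Fin n) ℂ,
    ∀ z : ℂ, P z = ∑ ℓ ∈ Finset.range (d + 1), z ^ ℓ • C ℓ

/-- A monic `r × r` matrix polynomial of degree `d`: the coefficient of `z ^ d` is `I_r`. -/
def IsMonicMatPoly (r d : ℕ) (P : ℂ → Matrix (Fin r) (Fin r) ℂ) : Prop :=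
  ∃ C : ℕ → Matrix (Fin r) (Fin r) ℂ, C d = 1 ∧
    ∀ z : ℂ, P z = ∑ ℓ ∈ Finset.range (d + 1), z ^ ℓ • C ℓ

/-- Entrywise contour integral of a matrix-valued function along `γ : [0,1] → ℂ`. -/
noncomputable def contourIntegralM {m n : ℕ} (γ : ℝ → ℂ) (F : ℂ → Matrix (Fin m) (Fin n) ℂ) :
    Matrix (Fin m) (Fin n) ℂ :=
  Matrix.of fun i j => ∫ t in (0:ℝ)..1, deriv γ t * F (γ t) i j

/-!
Write `j = n + 1` and `μ k = ∫_γ z^k W(z) dz`. For `P = ∑_k z^k C_k`, linearity of the integral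
turns `∫_γ z^ℓ P(z) W(z) dz` into `∑_k C_k μ (k + ℓ)`, so each of the four conditions says that a
block linear system in the coefficients has exactly one solution, and the matrix of that system is
always the block Hankel matrix `(μ (a + b))_{a, b ≤ n}` (for monic `P` the leading coefficient
moves to the right-hand side). Unique solvability is equivalent to invertibility of this matrix.
Transposing turns the right-handed conditions for `W` into the left-handed ones for `Wᵀ`, whose
Hankel matrix is the transpose of that of `W`.
-/

open MeasureTheory Set Finset
open scoped Matrix

theorem Function.Injective.existsUnique_mem_range_and_iff {α β : Type*} {f : α → β}
    (hf : Function.Injective f) {q : β → Prop} :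
    (∃! b, b ∈ Set.range f ∧ q b) ↔ ∃! a, q (f a) := by
  constructor
  · rintro ⟨_, ⟨⟨a, rfl⟩, ha⟩, huniq⟩
    exact ⟨a, ha, fun a' ha' => hf (huniq _ ⟨⟨a', rfl⟩, ha'⟩)⟩
  · rintro ⟨a, ha, huniq⟩
    refine ⟨f a, ⟨⟨a, rfl⟩, ha⟩, ?_⟩
    rintro _ ⟨⟨a', rfl⟩, ha'⟩
    rw [huniq a' ha']

section HankelSystem

variable {K : Type*} {l m : Type*}

theorem Matrix.existsUnique_mul_eq_iff_isUnit [Field K] [Fintype m] [DecidableEq m] [Nonempty l]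
    (H : Matrix m m K) (B : Matrix l m K) : (∃! X : Matrix l m K, X * H = B) ↔ IsUnit H := by
  constructor
  · rintro ⟨X, hX, huniq⟩
    refine Matrix.vecMul_injective_iff_isUnit.mp fun v w (hvw : v ᵥ* H = w ᵥ* H) => ?_
    have hshift : (X + (Matrix.replicateRow l (v - w) : Matrix l m K)) * H = B := by
      rw [Matrix.add_mul, ← Matrix.replicateRow_vecMul, Matrix.sub_vecMul, hvw, sub_self,
        Matrix.replicateRow_zero, add_zero, hX]
    have hzero := huniq _ hshift
    rwa [add_eq_left, Matrix.replicateRow_eq_zero, sub_eq_zero] at hzero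
  · intro hH
    have hdet := (Matrix.isUnit_iff_isUnit_det H).mp hH
    refine ⟨B * H⁻¹, Matrix.nonsing_inv_mul_cancel_right H B hdet, fun X hX => ?_⟩
    rw [← hX, Matrix.mul_nonsing_inv_cancel_right H X hdet]

def blockHankel (μ : ℕ → Matrix m m K) (n : ℕ) : Matrix (Fin (n + 1) × m) (Fin (n + 1) × m) K :=
  Matrix.of fun a b => μ (a.1 + b.1) a.2 b.2

@[simps]
def blockRowEquiv (ι : Type*) : (ι → Matrix l m K) ≃ Matrix l (ι × m) K where
  toFun C := Matrix.of fun i a => C a.1 i a.2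
  invFun X k := Matrix.of fun i p => X i (k, p)
  left_inv _ := rfl
  right_inv _ := rfl

theorem blockRowEquiv_mul_blockHankel [CommRing K] [Fintype m] (μ : ℕ → Matrix m m K) {n : ℕ}
    (C : Fin (n + 1) → Matrix l m K) :
    blockRowEquiv _ C * blockHankel μ n =
      blockRowEquiv _ (fun ℓ : Fin (n + 1) => ∑ k : Fin (n + 1), C k * μ (k + ℓ)) := by
  ext i b
  simp [blockHankel, Matrix.mul_apply, Fintype.sum_prod_type, Matrix.sum_apply]

theorem existsUnique_sum_mul_eq_iff_isUnit_blockHankel [Field K] [Fintype m] [DecidableEq m]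
    [Nonempty m] (μ : ℕ → Matrix m m K) {n : ℕ} (B : Fin (n + 1) → Matrix m m K) :
    (∃! C : Fin (n + 1) → Matrix m m K,
        ∀ ℓ : Fin (n + 1), ∑ k : Fin (n + 1), C k * μ (k + ℓ) = B ℓ) ↔
      IsUnit (blockHankel μ n) := by
  rw [← Matrix.existsUnique_mul_eq_iff_isUnit _ (blockRowEquiv _ B)]
  refine (blockRowEquiv _).existsUnique_congr fun C => ?_
  rw [blockRowEquiv_mul_blockHankel, (blockRowEquiv _).apply_eq_iff_eq, funext_iff]

theorem blockHankel_transpose (μ : ℕ → Matrix m m K) (n : ℕ) :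
    blockHankel (fun k => (μ k)ᵀ) n = (blockHankel μ n)ᵀ := by
  ext a b
  simp [blockHankel, add_comm]

end HankelSystem

section ContourIntegral

variable {γ : ℝ → ℂ} {l m n : ℕ}

theorem intervalIntegrable_deriv_mul_comp (hγ : ContDiffOn ℝ 1 γ (Icc 0 1)) {f : ℂ → ℂ}
    (hf : ContinuousOn f (γ '' Icc 0 1)) :
    IntervalIntegrable (fun t => deriv γ t * f (γ t)) volume 0 1 := by
  have hcont : ContinuousOn (fun t => derivWithin γ (Icc 0 1) t * f (γ t)) (Icc 0 1) :=
    (hγ.continuousOn_derivWithin (uniqueDiffOn_Icc one_pos) le_rfl).mul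
      (hf.comp hγ.continuousOn (mapsTo_image γ _))
  rw [intervalIntegrable_iff_integrableOn_Ioo_of_le zero_le_one]
  refine (hcont.integrableOn_Icc.mono_set Ioo_subset_Icc_self).congr_fun (fun t ht => ?_)
    measurableSet_Ioo
  -- `deriv γ` may be junk at the endpoints, but inside `(0, 1)` it is the one-sided derivative.
  dsimp only
  rw [derivWithin_of_mem_nhds (Icc_mem_nhds ht.1 ht.2)]

theorem intervalIntegrable_deriv_mul_entry (hγ : ContDiffOn ℝ 1 γ (Icc 0 1))
    {F : ℂ → Matrix (Fin m) (Fin n) ℂ} (hF : ContinuousOn F (γ '' Icc 0 1)) (i : Fin m)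
    (j : Fin n) : IntervalIntegrable (fun t => deriv γ t * F (γ t) i j) volume 0 1 :=
  intervalIntegrable_deriv_mul_comp hγ
    ((continuous_apply j).comp_continuousOn ((continuous_apply i).comp_continuousOn hF))

theorem contourIntegralM_finsetSum (hγ : ContDiffOn ℝ 1 γ (Icc 0 1)) {ι : Type*} (s : Finset ι)
    {F : ι → ℂ → Matrix (Fin m) (Fin n) ℂ} (hF : ∀ i ∈ s, ContinuousOn (F i) (γ '' Icc 0 1)) :
    contourIntegralM γ (fun z => ∑ i ∈ s, F i z) = ∑ i ∈ s, contourIntegralM γ (F i) := by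
  ext p q
  simp only [contourIntegralM, Matrix.of_apply, Matrix.sum_apply, Finset.mul_sum]
  exact intervalIntegral.integral_finsetSum fun i hi =>
    intervalIntegrable_deriv_mul_entry hγ (hF i hi) p q

theorem contourIntegralM_mul_left (hγ : ContDiffOn ℝ 1 γ (Icc 0 1))
    (A : Matrix (Fin l) (Fin m) ℂ) {F : ℂ → Matrix (Fin m) (Fin n) ℂ}
    (hF : ContinuousOn F (γ '' Icc 0 1)) :
    contourIntegralM γ (fun z => A * F z) = A * contourIntegralM γ F := by
  ext p q
  simp only [contourIntegralM, Matrix.of_apply, Matrix.mul_apply, Finset.mul_sum,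
    mul_left_comm (deriv γ _)]
  rw [intervalIntegral.integral_finsetSum fun k _ =>
    (intervalIntegrable_deriv_mul_entry hγ hF k q).const_mul _]
  simp_rw [intervalIntegral.integral_const_mul]

theorem contourIntegralM_transpose (F : ℂ → Matrix (Fin m) (Fin n) ℂ) :
    (contourIntegralM γ F)ᵀ = contourIntegralM γ (fun z => (F z)ᵀ) :=
  rfl

end ContourIntegral

section MatPoly

variable {m n d : ℕ}

def matPolyOf (C : Fin (d + 1) → Matrix (Fin m) (Fin n) ℂ) (z : ℂ) : Matrix (Fin m) (Fin n) ℂ :=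
  ∑ k : Fin (d + 1), z ^ (k : ℕ) • C k

theorem eq_zero_of_forall_sum_pow_mul_eq_zero {R : Type*} [CommRing R] [IsDomain R] [Infinite R]
    {c : Fin d → R} (h : ∀ x : R, ∑ k : Fin d, x ^ (k : ℕ) * c k = 0) : c = 0 := by
  set p : Polynomial R := ∑ k : Fin d, Polynomial.monomial k (c k)
  have hp : p = 0 := Polynomial.funext fun x => by
    simpa [p, Polynomial.eval_finsetSum, mul_comm] using h x
  funext k
  simpa [p, Polynomial.finsetSum_coeff, Polynomial.coeff_monomial, Fin.val_inj] using
    congrArg (Polynomial.coeff · k) hp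

theorem matPolyOf_injective : Function.Injective (matPolyOf (m := m) (n := n) (d := d)) := by
  intro C C' h
  funext k
  ext i j
  have hcoeff := eq_zero_of_forall_sum_pow_mul_eq_zero (c := fun k => C k i j - C' k i j)
    fun z => by
      simpa [matPolyOf, Matrix.sum_apply, mul_sub, sub_eq_zero] using
        congrFun (congrFun (congrFun h z) i) j
  exact sub_eq_zero.mp (congrFun hcoeff k)

theorem sum_range_eq_matPolyOf (C : ℕ → Matrix (Fin m) (Fin n) ℂ) (z : ℂ) :
    ∑ ℓ ∈ range (d + 1), z ^ ℓ • C ℓ = matPolyOf (fun k : Fin (d + 1) => C k) z :=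
  (Fin.sum_univ_eq_sum_range (fun ℓ => z ^ ℓ • C ℓ) _).symm

theorem isMatPoly_iff_mem_range {P : ℂ → Matrix (Fin m) (Fin n) ℂ} :
    IsMatPoly m n d P ↔ P ∈ Set.range (matPolyOf (d := d)) := by
  constructor
  · rintro ⟨C, hP⟩
    exact ⟨fun k => C k, funext fun z => by rw [hP, sum_range_eq_matPolyOf]⟩
  · rintro ⟨C, rfl⟩
    refine ⟨Function.extend Fin.val C 0, fun z => ?_⟩
    simp only [sum_range_eq_matPolyOf, Fin.val_injective.extend_apply]

theorem isMonicMatPoly_iff_mem_range {P : ℂ → Matrix (Fin m) (Fin m) ℂ} :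
    IsMonicMatPoly m d P ↔
      P ∈ Set.range fun C : Fin d → Matrix (Fin m) (Fin m) ℂ => matPolyOf (Fin.snoc C 1) := by
  constructor
  · rintro ⟨C, hC, hP⟩
    have hsnoc : Fin.snoc (Fin.init fun k : Fin (d + 1) => C k) 1 = fun k : Fin (d + 1) => C k := by
      simpa [hC] using Fin.snoc_init_self fun k : Fin (d + 1) => C k
    refine ⟨Fin.init fun k => C k, ?_⟩
    simp only [hsnoc]
    exact funext fun z => by rw [hP, sum_range_eq_matPolyOf]
  · rintro ⟨C, rfl⟩
    refine ⟨Function.extend Fin.val (Fin.snoc C 1) 0, ?_, fun z => ?_⟩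
    · simpa using Fin.val_injective.extend_apply (Fin.snoc C 1 : Fin (d + 1) → _) 0 (Fin.last d)
    · simp only [sum_range_eq_matPolyOf, Fin.val_injective.extend_apply]

theorem matPolyOf_snoc_one_injective :
    Function.Injective fun C : Fin d → Matrix (Fin m) (Fin m) ℂ => matPolyOf (Fin.snoc C 1) :=
  fun C C' h => by simpa using congrArg Fin.init (matPolyOf_injective h)

end MatPoly

section Transpose

variable {m n d : ℕ}

theorem IsMatPoly.transpose {P : ℂ → Matrix (Fin m) (Fin n) ℂ} (hP : IsMatPoly m n d P) :
    IsMatPoly n m d fun z => (P z)ᵀ := by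
  obtain ⟨C, hC⟩ := hP
  exact ⟨fun ℓ => (C ℓ)ᵀ, fun z => by simp [hC, Matrix.transpose_sum]⟩

theorem isMatPoly_transpose_iff {P : ℂ → Matrix (Fin m) (Fin n) ℂ} :
    IsMatPoly n m d (fun z => (P z)ᵀ) ↔ IsMatPoly m n d P :=
  ⟨fun h => by simpa using h.transpose, IsMatPoly.transpose⟩

theorem IsMonicMatPoly.transpose {P : ℂ → Matrix (Fin m) (Fin m) ℂ} (hP : IsMonicMatPoly m d P) :
    IsMonicMatPoly m d fun z => (P z)ᵀ := by
  obtain ⟨C, hC1, hC⟩ := hP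
  exact ⟨fun ℓ => (C ℓ)ᵀ, by simp [hC1], fun z => by simp [hC, Matrix.transpose_sum]⟩

theorem isMonicMatPoly_transpose_iff {P : ℂ → Matrix (Fin m) (Fin m) ℂ} :
    IsMonicMatPoly m d (fun z => (P z)ᵀ) ↔ IsMonicMatPoly m d P :=
  ⟨fun h => by simpa using h.transpose, IsMonicMatPoly.transpose⟩

end Transpose

section OrthogonalPolynomials

variable {r : ℕ} {γ : ℝ → ℂ} {W : ℂ → Matrix (Fin r) (Fin r) ℂ}

noncomputable def matMoment (γ : ℝ → ℂ) (W : ℂ → Matrix (Fin r) (Fin r) ℂ) (k : ℕ) :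
    Matrix (Fin r) (Fin r) ℂ :=
  contourIntegralM γ fun z => z ^ k • W z

theorem isUnit_blockHankel_matMoment_transpose_iff (n : ℕ) :
    IsUnit (blockHankel (matMoment γ fun z => (W z)ᵀ) n) ↔
      IsUnit (blockHankel (matMoment γ W) n) := by
  have hμ : matMoment γ (fun z => (W z)ᵀ) = fun k => (matMoment γ W k)ᵀ := by
    funext k
    simp [matMoment, contourIntegralM_transpose]
  rw [hμ, blockHankel_transpose, Matrix.isUnit_transpose]

theorem contourIntegralM_pow_smul_matPolyOf_mul (hγ : ContDiffOn ℝ 1 γ (Icc 0 1))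
    (hW : ContinuousOn W (γ '' Icc 0 1)) {d : ℕ} (C : Fin (d + 1) → Matrix (Fin r) (Fin r) ℂ)
    (ℓ : ℕ) :
    contourIntegralM γ (fun z => z ^ ℓ • (matPolyOf C z * W z)) =
      ∑ k, C k * matMoment γ W (k + ℓ) := by
  have hmoment : ∀ k : ℕ, ContinuousOn (fun z => z ^ k • W z) (γ '' Icc 0 1) :=
    fun k => (continuousOn_pow k).smul hW
  calc contourIntegralM γ (fun z => z ^ ℓ • (matPolyOf C z * W z))
      = contourIntegralM γ (fun z => ∑ k, C k * (z ^ ((k : ℕ) + ℓ) • W z)) := by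
        congr 1
        funext z
        simp only [matPolyOf, Finset.sum_mul, Finset.smul_sum, smul_mul_assoc, mul_smul_comm,
          pow_add, smul_smul, mul_comm]
    _ = ∑ k, C k * matMoment γ W (k + ℓ) := by
        rw [contourIntegralM_finsetSum hγ _ (F := fun k z => C k * (z ^ ((k : ℕ) + ℓ) • W z))
          fun k _ => (continuous_const.matrix_mul continuous_id).comp_continuousOn (hmoment _)]
        exact Finset.sum_congr rfl fun k _ => contourIntegralM_mul_left hγ _ (hmoment _)

theorem existsUnique_right_orthogonal_iff_left_transpose
    {IsPoly : (ℂ → Matrix (Fin r) (Fin r) ℂ) → Prop}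
    (hIsPoly : ∀ P, IsPoly (fun z => (P z)ᵀ) ↔ IsPoly P) {T : ℕ → Matrix (Fin r) (Fin r) ℂ}
    (hT : ∀ ℓ, (T ℓ)ᵀ = T ℓ) (j : ℕ) :
    (∃! P, IsPoly P ∧ ∀ ℓ < j, contourIntegralM γ (fun z => z ^ ℓ • (W z * P z)) = T ℓ) ↔
      ∃! P, IsPoly P ∧ ∀ ℓ < j, contourIntegralM γ (fun z => z ^ ℓ • (P z * (W z)ᵀ)) = T ℓ := by
  let e := Function.Involutive.toPerm (fun (P : ℂ → Matrix (Fin r) (Fin r) ℂ) z => (P z)ᵀ)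
    fun P => rfl
  refine e.existsUnique_congr fun P => and_congr (hIsPoly P).symm (forall₂_congr fun ℓ _ => ?_)
  have hint : contourIntegralM γ (fun z => z ^ ℓ • ((P z)ᵀ * (W z)ᵀ)) =
      (contourIntegralM γ fun z => z ^ ℓ • (W z * P z))ᵀ := by
    simp [contourIntegralM_transpose, Matrix.transpose_mul]
  change _ ↔ contourIntegralM γ (fun z => z ^ ℓ • ((P z)ᵀ * (W z)ᵀ)) = T ℓ
  rw [hint, ← Matrix.transpose_inj, hT]

variable [NeZero r]

theorem existsUnique_monic_left_orthogonal_iff (hγ : ContDiffOn ℝ 1 γ (Icc 0 1))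
    (hW : ContinuousOn W (γ '' Icc 0 1)) (n : ℕ) :
    (∃! P : ℂ → Matrix (Fin r) (Fin r) ℂ, IsMonicMatPoly r (n + 1) P ∧
        ∀ ℓ < n + 1, contourIntegralM γ (fun z => z ^ ℓ • (P z * W z)) = 0) ↔
      IsUnit (blockHankel (matMoment γ W) n) := by
  simp_rw [isMonicMatPoly_iff_mem_range,
    matPolyOf_snoc_one_injective.existsUnique_mem_range_and_iff]
  rw [← existsUnique_sum_mul_eq_iff_isUnit_blockHankel _
    fun ℓ : Fin (n + 1) => -matMoment γ W (n + 1 + ℓ)]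
  refine existsUnique_congr fun C => ?_
  rw [Fin.forall_iff]
  refine forall₂_congr fun ℓ _ => ?_
  rw [contourIntegralM_pow_smul_matPolyOf_mul hγ hW, Fin.sum_univ_castSucc]
  simp [add_eq_zero_iff_eq_neg]

theorem existsUnique_normalized_left_orthogonal_iff (hγ : ContDiffOn ℝ 1 γ (Icc 0 1))
    (hW : ContinuousOn W (γ '' Icc 0 1)) (n : ℕ) :
    (∃! Q : ℂ → Matrix (Fin r) (Fin r) ℂ, IsMatPoly r r n Q ∧
        ∀ ℓ < n + 1, contourIntegralM γ (fun z => z ^ ℓ • (Q z * W z)) =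
          if ℓ = n then 1 else 0) ↔
      IsUnit (blockHankel (matMoment γ W) n) := by
  simp_rw [isMatPoly_iff_mem_range, matPolyOf_injective.existsUnique_mem_range_and_iff]
  rw [← existsUnique_sum_mul_eq_iff_isUnit_blockHankel _
    fun ℓ : Fin (n + 1) => if (ℓ : ℕ) = n then 1 else 0]
  refine existsUnique_congr fun C => ?_
  rw [Fin.forall_iff]
  refine forall₂_congr fun ℓ _ => ?_
  rw [contourIntegralM_pow_smul_matPolyOf_mul hγ hW]

theorem existsUnique_monic_right_orthogonal_iff (hγ : ContDiffOn ℝ 1 γ (Icc 0 1))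
    (hW : ContinuousOn W (γ '' Icc 0 1)) (n : ℕ) :
    (∃! P : ℂ → Matrix (Fin r) (Fin r) ℂ, IsMonicMatPoly r (n + 1) P ∧
        ∀ ℓ < n + 1, contourIntegralM γ (fun z => z ^ ℓ • (W z * P z)) = 0) ↔
      IsUnit (blockHankel (matMoment γ W) n) := by
  rw [existsUnique_right_orthogonal_iff_left_transpose (fun _ => isMonicMatPoly_transpose_iff)
      fun _ => Matrix.transpose_zero,
    existsUnique_monic_left_orthogonal_iff (W := fun z => (W z)ᵀ) hγ
      (continuous_id.matrix_transpose.comp_continuousOn hW),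
    isUnit_blockHankel_matMoment_transpose_iff]

theorem existsUnique_normalized_right_orthogonal_iff (hγ : ContDiffOn ℝ 1 γ (Icc 0 1))
    (hW : ContinuousOn W (γ '' Icc 0 1)) (n : ℕ) :
    (∃! Q : ℂ → Matrix (Fin r) (Fin r) ℂ, IsMatPoly r r n Q ∧
        ∀ ℓ < n + 1, contourIntegralM γ (fun z => z ^ ℓ • (W z * Q z)) =
          if ℓ = n then 1 else 0) ↔
      IsUnit (blockHankel (matMoment γ W) n) := by
  rw [existsUnique_right_orthogonal_iff_left_transpose (fun _ => isMatPoly_transpose_iff)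
      fun _ => by split_ifs <;> simp,
    existsUnique_normalized_left_orthogonal_iff (W := fun z => (W z)ᵀ) hγ
      (continuous_id.matrix_transpose.comp_continuousOn hW),
    isUnit_blockHankel_matMoment_transpose_iff]

end OrthogonalPolynomials

/-- Existence and uniqueness for any one of the four families of matrix
orthogonal polynomials (monic left, monic right, normalized left, normalized right) of a
given degree is equivalent to existence and uniqueness for the other three. -/
theorem stmt7 (r j : ℕ) (hr : 1 ≤ r) (hj : 1 ≤ j)
    (γ : ℝ → ℂ) (hγ : ContDiffOn ℝ 1 γ (Set.Icc 0 1))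
    (W : ℂ → Matrix (Fin r) (Fin r) ℂ) (hW : ContinuousOn W (γ '' Set.Icc 0 1)) :
    ((∃! P : ℂ → Matrix (Fin r) (Fin r) ℂ, IsMonicMatPoly r j P ∧
        ∀ ℓ < j, contourIntegralM γ (fun z => z ^ ℓ • (P z * W z)) = 0) ↔
      (∃! P : ℂ → Matrix (Fin r) (Fin r) ℂ, IsMonicMatPoly r j P ∧
        ∀ ℓ < j, contourIntegralM γ (fun z => z ^ ℓ • (W z * P z)) = 0)) ∧
    ((∃! P : ℂ → Matrix (Fin r) (Fin r) ℂ, IsMonicMatPoly r j P ∧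
        ∀ ℓ < j, contourIntegralM γ (fun z => z ^ ℓ • (W z * P z)) = 0) ↔
      (∃! Q : ℂ → Matrix (Fin r) (Fin r) ℂ, IsMatPoly r r (j - 1) Q ∧
        ∀ ℓ < j, contourIntegralM γ (fun z => z ^ ℓ • (Q z * W z)) =
          if ℓ = j - 1 then 1 else 0)) ∧
    ((∃! Q : ℂ → Matrix (Fin r) (Fin r) ℂ, IsMatPoly r r (j - 1) Q ∧
        ∀ ℓ < j, contourIntegralM γ (fun z => z ^ ℓ • (Q z * W z)) =
          if ℓ = j - 1 then 1 else 0) ↔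
      (∃! Q : ℂ → Matrix (Fin r) (Fin r) ℂ, IsMatPoly r r (j - 1) Q ∧
        ∀ ℓ < j, contourIntegralM γ (fun z => z ^ ℓ • (W z * Q z)) =
          if ℓ = j - 1 then 1 else 0)) := by
  obtain ⟨n, rfl⟩ : ∃ n, j = n + 1 := ⟨j - 1, by omega⟩
  have : NeZero r := ⟨by omega⟩
  simp only [Nat.add_sub_cancel, existsUnique_monic_left_orthogonal_iff hγ hW,
    existsUnique_monic_right_orthogonal_iff hγ hW,
    existsUnique_normalized_left_orthogonal_iff hγ hW,
    existsUnique_normalized_right_orthogonal_iff hγ hW, and_self]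
end

section
/- Let L, M, N ≥ 1 be integers and let k ≥ 1 be an odd integer. Let W(z) = z^{−M}·B(z)^L for z ≠ 0, where B(z) is the 2×2 matrix with rows (1, 1) and (z^k, 1). Suppose 𝓡 : ℂ×ℂ → M₂(ℂ) is a left reproducing kernel of order N for W on the unit circle. Define 𝔯(ω,ζ) := (1/2)·[ ω^k·(𝓡(ω²,ζ²)_{1,1} + ζ^k·𝓡(ω²,ζ²)_{1,2}) + 𝓡(ω²,ζ²)_{2,1} + ζ^k·𝓡(ω²,ζ²)_{2,2} ]. Then for every polynomial p of the form p(ω) = P₁(ω²) + ω^k·P₂(ω²) with P₁, P₂ complex polynomials of degree ≤ N−1, and every ζ ∈ ℂ: ∮_{|ω|=1} p(ω)·2·ω^{1−2M−k}·(1+ω^k)^L·𝔯(ω,ζ) dω = p(ζ). -/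
/-- A scalar polynomial of degree at most `d`. -/
def IsPolyDeg (d : ℕ) (f : ℂ → ℂ) : Prop :=
  ∃ c : ℕ → ℂ, ∀ z : ℂ, f z = ∑ ℓ ∈ Finset.range (d + 1), c ℓ * z ^ ℓ

/-- Entrywise counterclockwise integral of a matrix-valued function over the circle
`|z| = ρ` centered at the origin. -/
noncomputable def circleIntegralM {m n : ℕ} (ρ : ℝ) (F : ℂ → Matrix (Fin m) (Fin n) ℂ) :
    Matrix (Fin m) (Fin n) ℂ :=
  Matrix.of fun i j => circleIntegral (fun z => F z i j) 0 ρ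

/-- `R` is a (matrix-valued) left reproducing kernel of order `N` for the weight `W` on
the circle `|z| = ρ`. -/
def IsLeftRKCircleM (r N : ℕ) (ρ : ℝ) (W : ℂ → Matrix (Fin r) (Fin r) ℂ)
    (R : ℂ → ℂ → Matrix (Fin r) (Fin r) ℂ) : Prop :=
  (∀ z : ℂ, IsMatPoly r r (N - 1) fun w => R w z) ∧
  (∀ w : ℂ, IsMatPoly r r (N - 1) fun z => R w z) ∧
  ∀ P : ℂ → Matrix (Fin r) (Fin r) ℂ, IsMatPoly r r (N - 1) P →
    ∀ z : ℂ, circleIntegralM ρ (fun w => P w * W w * R w z) = P z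

/-- `K` is a scalar left reproducing kernel of order `N` for the weight `W` on the circle
`|z| = ρ`. -/
def IsLeftRKCircleS (N : ℕ) (ρ : ℝ) (W : ℂ → ℂ) (K : ℂ → ℂ → ℂ) : Prop :=
  (∀ z : ℂ, IsPolyDeg (N - 1) fun w => K w z) ∧
  (∀ w : ℂ, IsPolyDeg (N - 1) (K w)) ∧
  ∀ p : ℂ → ℂ, IsPolyDeg (N - 1) p →
    ∀ z : ℂ, circleIntegral (fun w => p w * W w * K w z) 0 ρ = p z

open Real Set Metric Matrix

section CircleIntegral

variable {E : Type*} [NormedAddCommGroup E] [NormedSpace ℂ E]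

theorem circleMap_zero_add_pi (R θ : ℝ) : circleMap 0 R (θ + π) = -circleMap 0 R θ := by
  simp only [circleMap_zero, Complex.ofReal_add, add_mul, Complex.exp_add, Complex.exp_pi_mul_I]
  ring

theorem circleIntegral_comp_neg (f : ℂ → E) (R : ℝ) :
    (∮ z in C(0, R), f (-z)) = -∮ z in C(0, R), f z := by
  set h : ℝ → E := fun θ => deriv (circleMap 0 R) θ • f (circleMap 0 R θ)
  have hper : Function.Periodic h (2 * π) := fun θ => by simp [h, periodic_circleMap 0 R θ]
  have hshift : ∀ θ, deriv (circleMap 0 R) θ • f (-circleMap 0 R θ) = -h (θ + π) := fun θ => by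
    simp [h, circleMap_zero_add_pi]
  calc (∮ z in C(0, R), f (-z)) = ∫ θ in 0..2 * π, -h (θ + π) := by
        simp only [circleIntegral, hshift]
    _ = -∫ θ in π..π + 2 * π, h θ := by
        rw [intervalIntegral.integral_neg, intervalIntegral.integral_comp_add_right, zero_add,
          add_comm]
    _ = -∮ z in C(0, R), f z := by rw [hper.intervalIntegral_add_eq π 0, zero_add]; rfl

theorem circleIntegral_smul_comp_sq [CompleteSpace E] {g : ℂ → E} {R : ℝ}
    (hg : CircleIntegrable g 0 (R ^ 2)) :
    (∮ z in C(0, R), z • g (z ^ 2)) = ∮ w in C(0, R ^ 2), g w := by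
  set h : ℝ → E := fun θ => deriv (circleMap 0 (R ^ 2)) θ • g (circleMap 0 (R ^ 2) θ)
  have hper : Function.Periodic h (2 * π) := fun θ => by simp [h, periodic_circleMap 0 _ θ]
  have hint : ∀ a b, IntervalIntegrable h MeasureTheory.volume a b :=
    hper.intervalIntegrable₀ (by positivity) ((circleIntegrable_iff _).1 hg)
  have hdouble : ∀ θ, deriv (circleMap 0 R) θ • circleMap 0 R θ • g (circleMap 0 R θ ^ 2) =
      h (2 * θ) := fun θ => by
    rw [deriv_circleMap, smul_smul, mul_right_comm, ← sq, circleMap_zero_pow]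
    simp [h]
  calc (∮ z in C(0, R), z • g (z ^ 2)) = ∫ θ in 0..2 * π, h (2 * θ) := by
        simp only [circleIntegral, hdouble]
    _ = (2 : ℝ)⁻¹ • ∫ θ in 0..0 + (2 : ℤ) • (2 * π), h θ := by
        rw [intervalIntegral.integral_comp_mul_left h two_ne_zero]
        norm_num [mul_assoc]
    _ = ∮ w in C(0, R ^ 2), g w := by
        rw [hper.intervalIntegral_add_zsmul_eq 2 0 hint, zero_add, two_zsmul, ← two_smul ℝ,
          inv_smul_smul₀ two_ne_zero]
        rfl

theorem circleIntegral_eq_of_sub_comp_neg_eq [CompleteSpace E] {F G : ℂ → E} {R : ℝ}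
    (hR : 0 ≤ R) (hF : ContinuousOn F (sphere 0 R)) (hG : CircleIntegrable G 0 (R ^ 2))
    (hFG : EqOn (fun z => F z - F (-z)) (fun z => (2 * z) • G (z ^ 2)) (sphere 0 R)) :
    (∮ z in C(0, R), F z) = ∮ w in C(0, R ^ 2), G w := by
  have hFneg : ContinuousOn (fun z => F (-z)) (sphere 0 R) :=
    hF.comp continuous_neg.continuousOn fun z hz => by simpa using hz
  have htwice : (2 : ℂ) • (∮ z in C(0, R), F z) = (2 : ℂ) • ∮ w in C(0, R ^ 2), G w :=
    calc (2 : ℂ) • (∮ z in C(0, R), F z)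
        = (∮ z in C(0, R), F z) - ∮ z in C(0, R), F (-z) := by
          rw [circleIntegral_comp_neg, sub_neg_eq_add, two_smul]
      _ = ∮ z in C(0, R), (2 : ℂ) • z • G (z ^ 2) := by
          rw [← circleIntegral.integral_sub (hF.circleIntegrable hR) (hFneg.circleIntegrable hR),
            circleIntegral.integral_congr hR hFG]
          simp only [mul_smul]
      _ = (2 : ℂ) • ∮ w in C(0, R ^ 2), G w := by
          rw [circleIntegral.integral_smul, circleIntegral_smul_comp_sq hG]
  exact smul_right_injective E two_ne_zero htwice

end CircleIntegral

theorem IsPolyDeg.continuous {d : ℕ} {f : ℂ → ℂ} (hf : IsPolyDeg d f) : Continuous f := by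
  obtain ⟨c, hc⟩ := hf
  rw [funext hc]
  fun_prop

theorem IsMatPoly.continuous {m n d : ℕ} {P : ℂ → Matrix (Fin m) (Fin n) ℂ}
    (hP : IsMatPoly m n d P) : Continuous P := by
  obtain ⟨C, hC⟩ := hP
  rw [funext hC]
  fun_prop

theorem IsLeftRKCircleM.circleIntegral_vecMul_dotProduct {r N : ℕ} {ρ : ℝ}
    {W : ℂ → Matrix (Fin r) (Fin r) ℂ} {R : ℂ → ℂ → Matrix (Fin r) (Fin r) ℂ}
    (hR : IsLeftRKCircleM r N ρ W R) (hW : ContinuousOn W (sphere 0 |ρ|))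
    {p : ℂ → Fin r → ℂ} (hp : ∀ i, IsPolyDeg (N - 1) (p · i)) (u : Fin r → ℂ)
    (z : ℂ) :
    (∮ w in C(0, ρ), (p w ᵥ* W w) ⬝ᵥ (R w z *ᵥ u)) = p z ⬝ᵥ u := by
  choose c hc using hp
  set P : ℂ → Matrix (Fin r) (Fin r) ℂ := fun w => Matrix.of fun _ => p w
  have hP : IsMatPoly r r (N - 1) P := ⟨fun ℓ => Matrix.of fun _ j => c j ℓ, fun w => by
    ext i j
    simp [P, hc, Matrix.sum_apply, mul_comm]⟩
  have hPc := hP.continuous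
  have hRc := (hR.1 z).continuous
  have hPWR : ContinuousOn (fun w => P w * W w * R w z) (sphere 0 |ρ|) := by fun_prop
  have hdiag : ∀ w, (p w ᵥ* W w) ⬝ᵥ (R w z *ᵥ u) =
      ∑ j, u j • (P w * W w * R w z) j j := fun w => by
    rw [dotProduct_mulVec, vecMul_vecMul, Matrix.mul_assoc]
    simp only [dotProduct, mul_apply_eq_vecMul, smul_eq_mul, mul_comm]
    rfl
  have hrep : ∀ j, (∮ w in C(0, ρ), (P w * W w * R w z) j j) = p z j := fun j =>
    congrFun (congrFun (hR.2.2 P hP z) j) j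
  simp only [hdiag]
  rw [circleIntegral.integral_fun_sum fun j _ => ?_]
  · simp only [circleIntegral.integral_smul, hrep]
    simp only [dotProduct, smul_eq_mul, mul_comm]
  · exact (((continuous_apply j).comp (continuous_apply j)).comp_continuousOn
      hPWR).circleIntegrable'.const_smul

theorem vecMul_pow_eq_smul {n R : Type*} [Fintype n] [DecidableEq n] [CommSemiring R]
    {A : Matrix n n R} {v : n → R} {c : R} (h : v ᵥ* A = c • v) (L : ℕ) :
    v ᵥ* A ^ L = c ^ L • v := by
  induction L with
  | zero => simp
  | succ L ih => rw [pow_succ, ← vecMul_vecMul, ih, smul_vecMul, h, smul_smul, pow_succ]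

theorem vecMul_of_sq_eq_one_add_smul (t : ℂ) :
    ![t, 1] ᵥ* !![1, 1; t ^ 2, 1] = (1 + t) • ![t, 1] := by
  ext i
  fin_cases i <;> simp [vecMul, dotProduct] <;> ring

theorem jacobi_integrand_sub_comp_neg {k : ℕ} (hk : Odd k) (L M : ℕ) {ω : ℂ} (hω : ω ≠ 0)
    (a b : ℂ) (x : Fin 2 → ℂ) :
    (a + ω ^ k * b) * (2 * ω ^ ((1 : ℤ) - 2 * M - k) * (1 + ω ^ k) ^ L) *
        ((1 / 2 : ℂ) * (![ω ^ k, 1] ⬝ᵥ x)) -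
      (a + (-ω) ^ k * b) * (2 * (-ω) ^ ((1 : ℤ) - 2 * M - k) * (1 + (-ω) ^ k) ^ L) *
        ((1 / 2 : ℂ) * (![(-ω) ^ k, 1] ⬝ᵥ x)) =
      2 * ω *
        ((![a, b] ᵥ* ((ω ^ 2) ^ (-(M : ℤ)) • !![1, 1; (ω ^ 2) ^ k, 1] ^ L)) ⬝ᵥ x) := by
  have heven : Even ((1 : ℤ) - 2 * M - k) := by
    obtain ⟨j, rfl⟩ := hk
    exact ⟨-(M : ℤ) - j, by push_cast; ring⟩
  have hshift : ω ^ ((1 : ℤ) - 2 * M - k) * ω ^ k = ω * (ω ^ 2) ^ (-(M : ℤ)) := by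
    rw [← zpow_natCast ω k, ← zpow_natCast ω 2, ← _root_.zpow_mul, ← zpow_add₀ hω,
      ← zpow_one_add₀ hω]
    ring_nf
  rw [hk.neg_pow, heven.neg_zpow, ← pow_mul, mul_comm 2 k, pow_mul]
  set t := ω ^ k
  set A := !![1, 1; t ^ 2, 1] ^ L
  have hplus : (1 + t) ^ L * (![t, 1] ⬝ᵥ x) = (![t, 1] ᵥ* A) ⬝ᵥ x := by
    rw [vecMul_pow_eq_smul (vecMul_of_sq_eq_one_add_smul t), smul_dotProduct, smul_eq_mul]
  have hminus : (1 + -t) ^ L * (![-t, 1] ⬝ᵥ x) = (![-t, 1] ᵥ* A) ⬝ᵥ x := by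
    have hA : A = !![1, 1; (-t) ^ 2, 1] ^ L := by rw [neg_sq]
    rw [hA, vecMul_pow_eq_smul (vecMul_of_sq_eq_one_add_smul (-t)), smul_dotProduct,
      smul_eq_mul]
  have hodd : (a + t * b) • ![t, 1] - (a + -t * b) • ![-t, 1] = (2 * t) • ![a, b] := by
    ext i
    fin_cases i <;> simp <;> ring
  calc _ = ω ^ ((1 : ℤ) - 2 * M - k) * ((a + t * b) * ((1 + t) ^ L * (![t, 1] ⬝ᵥ x)) -
        (a + -t * b) * ((1 + -t) ^ L * (![-t, 1] ⬝ᵥ x))) := by ring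
    _ = ω ^ ((1 : ℤ) - 2 * M - k) *
          (((a + t * b) • ![t, 1] - (a + -t * b) • ![-t, 1]) ᵥ* A ⬝ᵥ x) := by
        rw [hplus, hminus, sub_vecMul, sub_dotProduct, smul_vecMul, smul_vecMul, smul_dotProduct,
          smul_dotProduct, smul_eq_mul, smul_eq_mul]
    _ = _ := by
        rw [hodd, vecMul_smul, smul_vecMul, smul_dotProduct, smul_dotProduct, smul_eq_mul,
          smul_eq_mul]
        linear_combination 2 * ((![a, b] ᵥ* A) ⬝ᵥ x) * hshift

theorem stmt11_general (L M N k : ℕ)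
    (hk : Odd k)
    (K : ℂ → ℂ → Matrix (Fin 2) (Fin 2) ℂ)
    (hK : IsLeftRKCircleM 2 N 1
      (fun z => z ^ (-(M : ℤ)) • (!![1, 1; z ^ k, 1] : Matrix (Fin 2) (Fin 2) ℂ) ^ L) K) :
    ∀ P₁ P₂ : ℂ → ℂ, IsPolyDeg (N - 1) P₁ → IsPolyDeg (N - 1) P₂ →
      ∀ ζ : ℂ,
        circleIntegral (fun ω =>
          (P₁ (ω ^ 2) + ω ^ k * P₂ (ω ^ 2)) *
            (2 * ω ^ ((1 : ℤ) - 2 * (M : ℤ) - (k : ℤ)) * (1 + ω ^ k) ^ L) *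
            ((1 / 2 : ℂ) *
              (ω ^ k * (K (ω ^ 2) (ζ ^ 2) 0 0 + ζ ^ k * K (ω ^ 2) (ζ ^ 2) 0 1) +
                K (ω ^ 2) (ζ ^ 2) 1 0 + ζ ^ k * K (ω ^ 2) (ζ ^ 2) 1 1))) 0 1
          = P₁ (ζ ^ 2) + ζ ^ k * P₂ (ζ ^ 2) := by
  intro P₁ P₂ hP₁ hP₂ ζ
  have hzpow (n : ℤ) : ContinuousOn (fun ω : ℂ => ω ^ n) (sphere 0 1) :=
    continuousOn_id.zpow₀ n fun a ha => Or.inl (ne_zero_of_mem_unit_sphere ⟨a, ha⟩)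
  have hW : ContinuousOn (fun z : ℂ => z ^ (-(M : ℤ)) • !![1, 1; z ^ k, 1] ^ L)
      (sphere 0 |1|) := by
    rw [abs_one]
    fun_prop
  have hrep := hK.circleIntegral_vecMul_dotProduct hW (p := fun w => ![P₁ w, P₂ w])
    (by simp [Fin.forall_fin_two, hP₁, hP₂]) ![1, ζ ^ k] (ζ ^ 2)
  have hkernel (A : Matrix (Fin 2) (Fin 2) ℂ) (t s : ℂ) :
      t * (A 0 0 + s * A 0 1) + A 1 0 + s * A 1 1 = ![t, 1] ⬝ᵥ (A *ᵥ ![1, s]) := by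
    simp [dotProduct, mulVec]; ring
  simp only [hkernel]
  have hP₁c := hP₁.continuous
  have hP₂c := hP₂.continuous
  have hKc : Continuous fun w => K w (ζ ^ 2) := (hK.1 _).continuous
  refine (circleIntegral_eq_of_sub_comp_neg_eq (G := fun w =>
      (![P₁ w, P₂ w] ᵥ* (w ^ (-(M : ℤ)) • !![1, 1; w ^ k, 1] ^ L)) ⬝ᵥ
        (K w (ζ ^ 2) *ᵥ ![1, ζ ^ k])) zero_le_one ?_ ?_ fun ω hω => ?_).trans ?_
  · fun_prop
  · rw [one_pow]
    apply ContinuousOn.circleIntegrable zero_le_one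
    fun_prop
  · simp only [neg_sq]
    exact jacobi_integrand_sub_comp_neg hk L M (ne_zero_of_mem_unit_sphere ⟨ω, hω⟩) _ _ _
  · rw [one_pow, hrep]
    simp [dotProduct, mul_comm]

/-- For the weight `W(z) = z^{-M} B(z)^L` with `B(z) = !![1,1; z^k,1]`
and odd `k`, the scalar kernel `𝔯` built from the matrix reproducing kernel `𝓡`
reproduces all polynomials of the form `P₁(ω²) + ω^k P₂(ω²)` against the scalar Jacobi
weight `2 ω^{1-2M-k} (1+ω^k)^L` on the unit circle. -/
theorem stmt11 (L M N k : ℕ) (hL : 1 ≤ L) (hM : 1 ≤ M) (hN : 1 ≤ N)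
    (hk : Odd k) (hk1 : 1 ≤ k)
    (K : ℂ → ℂ → Matrix (Fin 2) (Fin 2) ℂ)
    (hK : IsLeftRKCircleM 2 N 1
      (fun z => z ^ (-(M : ℤ)) • (!![1, 1; z ^ k, 1] : Matrix (Fin 2) (Fin 2) ℂ) ^ L) K) :
    ∀ P₁ P₂ : ℂ → ℂ, IsPolyDeg (N - 1) P₁ → IsPolyDeg (N - 1) P₂ →
      ∀ ζ : ℂ,
        circleIntegral (fun ω =>
          (P₁ (ω ^ 2) + ω ^ k * P₂ (ω ^ 2)) *
            (2 * ω ^ ((1 : ℤ) - 2 * (M : ℤ) - (k : ℤ)) * (1 + ω ^ k) ^ L) *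
            ((1 / 2 : ℂ) *
              (ω ^ k * (K (ω ^ 2) (ζ ^ 2) 0 0 + ζ ^ k * K (ω ^ 2) (ζ ^ 2) 0 1) +
                K (ω ^ 2) (ζ ^ 2) 1 0 + ζ ^ k * K (ω ^ 2) (ζ ^ 2) 1 1))) 0 1
          = P₁ (ζ ^ 2) + ζ ^ k * P₂ (ζ ^ 2) :=
  stmt11_general L M N k hk K hK
end
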